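/- Let A be an L×N complex matrix all of whose columns have unit ℓ² norm, and let H be an N×P complex matrix with nonzero columns such that every column of H has at most s nonzero entries, all columns of AH are nonzero, and sμ(A) ≠ 1. Then the mutual coherence of AH satisfies μ(AH) ≤ ( μ(H) + s μ(A) ) / | 1 − s μ(A) |. -/

import Mathlib

open Matrix Finset Filter

noncomputable section

/-- A vector is `s`-sparse if it has at most `s` nonzero entries. -/
def sparse {n : Type*} (s : ℕ) (x : n → ℂ) : Prop := {i | x i ≠ 0}.ncard ≤ s

/-- The ℓ² norm of the `j`-th column of a matrix. -/
def colNorm {m n : Type*} [Fintype m] (A : Matrix m n ℂ) (j : n) : ℝ :=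
  Real.sqrt (∑ i, ‖A i j‖ ^ 2)

/-- The mutual coherence of a matrix:
`μ(A) = max_{j ≠ k} |⟨A_j, A_k⟩| / (‖A_j‖₂ ‖A_k‖₂)`. -/
def coherence {m n : Type*} [Fintype m] [Fintype n] (A : Matrix m n ℂ) : ℝ :=
  sSup {r : ℝ | ∃ j k, j ≠ k ∧ r = ‖(Aᴴ * A) j k‖ / (colNorm A j * colNorm A k)}

/-- The ℓ¹ norm of a vector. -/
def l1 {n : Type*} [Fintype n] (x : n → ℂ) : ℝ := ∑ i, ‖x i‖

/-- The ℓ^∞ norm of a vector. -/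
def linf {n : Type*} [Fintype n] (x : n → ℂ) : ℝ := ⨆ i, ‖x i‖

/-- The squared ℓ² norm of a vector. -/
def l2sq {n : Type*} [Fintype n] (x : n → ℂ) : ℝ := ∑ i, ‖x i‖ ^ 2

/-- The entrywise max norm of a matrix, `‖M‖_max = max_{i,j} |M_{ij}|`. -/
def maxNorm {m n : Type*} [Fintype m] [Fintype n] (A : Matrix m n ℂ) : ℝ :=
  ⨆ p : m × n, ‖A p.1 p.2‖

/-- The induced ℓ¹ matrix norm (maximum absolute column sum). -/
def matL1 {m n : Type*} [Fintype m] [Fintype n] (A : Matrix m n ℂ) : ℝ :=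
  ⨆ j, ∑ i, ‖A i j‖

/-- `x` is a hard thresholding `H_s(z)` of `z`: it agrees with `z` on an
index set `I` of size `s` consisting of entries of largest modulus, and
vanishes outside `I`. -/
def IsHardThreshold {n : Type*} [Fintype n] (s : ℕ) (z x : n → ℂ) : Prop :=
  ∃ I : Finset n, I.card = s ∧ (∀ i ∈ I, ∀ j ∉ I, ‖z j‖ ≤ ‖z i‖) ∧
    (∀ i ∈ I, x i = z i) ∧ (∀ i ∉ I, x i = 0)

/-- `A` satisfies the restricted isometry property of order `t` with constant `δ`. -/
def SatisfiesRIP {m n : Type*} [Fintype m] [Fintype n] (A : Matrix m n ℂ) (t : ℕ) (δ : ℝ) :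
    Prop :=
  0 < δ ∧ δ < 1 ∧ ∀ z : n → ℂ, sparse t z →
    (1 - δ) * l2sq z ≤ l2sq (A.mulVec z) ∧ l2sq (A.mulVec z) ≤ (1 + δ) * l2sq z

/-- The spectral (operator ℓ²) norm of a square matrix. -/
def specNorm {n : Type*} [Fintype n] [DecidableEq n] (M : Matrix n n ℂ) : ℝ :=
  ‖Matrix.toEuclideanCLM (𝕜 := ℂ) M‖

/-! With `h_j` the columns of `H`, the Gram matrix of `AH` is `HᴴH + Hᴴ(AᴴA - 1)H`, and the entries
of `AᴴA - 1` are bounded by `μ(A)`. So the `(j, k)` entry is perturbed by at most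
`μ(A) ‖h_j‖₁ ‖h_k‖₁ ≤ s μ(A) ‖h_j‖₂ ‖h_k‖₂`. Hence the off-diagonal Gram entries of `AH` are at
most `(μ(H) + s μ(A)) ‖h_j‖₂ ‖h_k‖₂`, while `‖A h_j‖₂² ≥ (1 - s μ(A)) ‖h_j‖₂²`. When `s μ(A) > 1`
the bound exceeds `1 ≥ μ(AH)`. -/

section Gram

variable {m n : Type*} [Fintype m]

lemma colNorm_nonneg (M : Matrix m n ℂ) (j : n) : 0 ≤ colNorm M j :=
  Real.sqrt_nonneg _

lemma conjTranspose_mul_self_apply (M : Matrix m n ℂ) (j k : n) :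
    (Mᴴ * M) j k = ∑ i, star (M i j) * M i k := by
  simp only [mul_apply, conjTranspose_apply]

lemma conjTranspose_mul_self_apply_self (M : Matrix m n ℂ) (j : n) :
    (Mᴴ * M) j j = ((colNorm M j ^ 2 : ℝ) : ℂ) := by
  rw [conjTranspose_mul_self_apply, colNorm, Real.sq_sqrt (by positivity)]
  push_cast
  exact sum_congr rfl fun i _ => Complex.conj_mul' (M i j)

lemma norm_conjTranspose_mul_self_apply_le (M : Matrix m n ℂ) (j k : n) :
    ‖(Mᴴ * M) j k‖ ≤ colNorm M j * colNorm M k := by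
  let x : EuclideanSpace ℂ m := WithLp.toLp 2 fun i => M i j
  let y : EuclideanSpace ℂ m := WithLp.toLp 2 fun i => M i k
  have hinner : (Mᴴ * M) j k = inner ℂ x y := by
    rw [conjTranspose_mul_self_apply, PiLp.inner_apply]
    exact sum_congr rfl fun i _ => mul_comm _ _
  rw [hinner]
  exact (norm_inner_le_norm x y).trans_eq (by simp only [x, y, EuclideanSpace.norm_eq, colNorm])

end Gram

section Coherence

variable {m n : Type*} [Fintype m] [Fintype n]

lemma bddAbove_coherence_set (M : Matrix m n ℂ) :
    BddAbove {r : ℝ | ∃ j k, j ≠ k ∧ r = ‖(Mᴴ * M) j k‖ / (colNorm M j * colNorm M k)} := by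
  refine (Set.finite_range fun jk : n × n =>
    ‖(Mᴴ * M) jk.1 jk.2‖ / (colNorm M jk.1 * colNorm M jk.2)).subset ?_ |>.bddAbove
  rintro r ⟨j, k, -, rfl⟩
  exact ⟨(j, k), rfl⟩

lemma coherence_nonneg (M : Matrix m n ℂ) : 0 ≤ coherence M := by
  refine Real.sSup_nonneg ?_
  rintro r ⟨j, k, -, rfl⟩
  exact div_nonneg (norm_nonneg _) (mul_nonneg (colNorm_nonneg M _) (colNorm_nonneg M _))

lemma coherence_le {M : Matrix m n ℂ} {B : ℝ} (hB : 0 ≤ B)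
    (h : ∀ j k, j ≠ k → ‖(Mᴴ * M) j k‖ / (colNorm M j * colNorm M k) ≤ B) :
    coherence M ≤ B :=
  Real.sSup_le (fun _ ⟨j, k, hjk, hr⟩ => hr ▸ h j k hjk) hB

lemma coherence_le_one (M : Matrix m n ℂ) : coherence M ≤ 1 :=
  coherence_le zero_le_one fun j k _ =>
    div_le_one_of_le₀ (norm_conjTranspose_mul_self_apply_le M j k)
      (mul_nonneg (colNorm_nonneg M _) (colNorm_nonneg M _))

lemma norm_conjTranspose_mul_self_apply_le_coherence (M : Matrix m n ℂ) {j k : n} (h : j ≠ k) :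
    ‖(Mᴴ * M) j k‖ ≤ coherence M * (colNorm M j * colNorm M k) := by
  rcases (mul_nonneg (colNorm_nonneg M j) (colNorm_nonneg M k)).eq_or_lt with h0 | hpos
  · simpa [← h0] using norm_conjTranspose_mul_self_apply_le M j k
  · rw [← div_le_iff₀ hpos]
    exact le_csSup (bddAbove_coherence_set M) ⟨j, k, h, rfl⟩

lemma coherence_le_div {M : Matrix m n ℂ} {a b : ℝ} (ν : n → ℝ) (ha : 0 ≤ a) (hb : 0 < b)
    (hoff : ∀ j k, j ≠ k → ‖(Mᴴ * M) j k‖ ≤ a * (ν j * ν k))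
    (hdiag : ∀ j, b * ν j ^ 2 ≤ colNorm M j ^ 2) :
    coherence M ≤ a / b := by
  refine coherence_le (div_nonneg ha hb.le) fun j k hjk => ?_
  have hc : 0 ≤ colNorm M j * colNorm M k := mul_nonneg (colNorm_nonneg M j) (colNorm_nonneg M k)
  have hden : b * (ν j * ν k) ≤ colNorm M j * colNorm M k := by
    have hsq : (b * (ν j * ν k)) ^ 2 ≤ (colNorm M j * colNorm M k) ^ 2 := by
      calc (b * (ν j * ν k)) ^ 2 = (b * ν j ^ 2) * (b * ν k ^ 2) := by ring
        _ ≤ colNorm M j ^ 2 * colNorm M k ^ 2 :=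
          mul_le_mul (hdiag j) (hdiag k) (by positivity) (by positivity)
        _ = (colNorm M j * colNorm M k) ^ 2 := by ring
    exact (le_abs_self _).trans ((sq_le_sq.1 hsq).trans_eq (abs_of_nonneg hc))
  rcases hc.eq_or_lt with h0 | hpos
  · rw [← h0, div_zero]
    exact div_nonneg ha hb.le
  · rw [div_le_div_iff₀ hpos hb]
    calc ‖(Mᴴ * M) j k‖ * b ≤ a * (ν j * ν k) * b := by gcongr; exact hoff j k hjk
      _ = a * (b * (ν j * ν k)) := by ring
      _ ≤ a * (colNorm M j * colNorm M k) := by gcongr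

end Coherence

section Sparse

variable {n : Type*} [Fintype n]

lemma l1_nonneg (x : n → ℂ) : 0 ≤ l1 x :=
  sum_nonneg fun _ _ => norm_nonneg _

lemma l1_sq_le_of_sparse {s : ℕ} {x : n → ℂ} (hx : sparse s x) : l1 x ^ 2 ≤ s * l2sq x := by
  classical
  set T := univ.filter fun i => x i ≠ 0
  have hT : T.card ≤ s := by
    rwa [sparse, ← coe_filter_univ, Set.ncard_coe_finset] at hx
  have hl1 : l1 x = ∑ i ∈ T, ‖x i‖ :=
    (sum_filter_of_ne fun i _ hi => norm_ne_zero_iff.1 hi).symm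
  calc l1 x ^ 2 = (∑ i ∈ T, ‖x i‖) ^ 2 := by rw [hl1]
    _ ≤ T.card * ∑ i ∈ T, ‖x i‖ ^ 2 := sq_sum_le_card_mul_sum_sq
    _ ≤ s * l2sq x := by
      gcongr
      exact sum_le_sum_of_subset_of_nonneg (subset_univ T) fun i _ _ => by positivity

lemma l1_le_sqrt_mul_of_sparse {s : ℕ} {x : n → ℂ} (hx : sparse s x) :
    l1 x ≤ √s * √(l2sq x) := by
  rw [← Real.sqrt_mul (Nat.cast_nonneg s)]
  exact Real.le_sqrt_of_sq_le (l1_sq_le_of_sparse hx)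

end Sparse

section Perturbation

lemma norm_conjTranspose_mul_mul_apply_le {l m n p : Type*} [Fintype l] [Fintype m]
    (B : Matrix l n ℂ) (E : Matrix l m ℂ) (C : Matrix m p ℂ) {μ : ℝ}
    (hE : ∀ a b, ‖E a b‖ ≤ μ) (j : n) (k : p) :
    ‖(Bᴴ * E * C) j k‖ ≤ μ * (l1 (fun i => B i j) * l1 (fun i => C i k)) :=
  calc ‖(Bᴴ * E * C) j k‖ = ‖∑ b, ∑ a, star (B a j) * E a b * C b k‖ := by
        simp only [mul_apply, conjTranspose_apply, sum_mul]
    _ ≤ ∑ b, ∑ a, ‖B a j‖ * μ * ‖C b k‖ := by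
        refine (norm_sum_le _ _).trans (sum_le_sum fun b _ => (norm_sum_le _ _).trans ?_)
        refine sum_le_sum fun a _ => ?_
        rw [norm_mul, norm_mul, norm_star]
        gcongr
        exact hE a b
    _ = μ * (l1 (fun i => B i j) * l1 (fun i => C i k)) := by
        rw [sum_comm, l1, l1, sum_mul_sum, mul_sum]
        refine sum_congr rfl fun a _ => ?_
        rw [mul_sum]
        exact sum_congr rfl fun b _ => by ring

variable {L n p : Type*} [Fintype L] [Fintype n]

lemma norm_conjTranspose_mul_self_sub_one_apply_le [DecidableEq n] {A : Matrix L n ℂ}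
    (hA : ∀ j, colNorm A j = 1) (a b : n) :
    ‖(Aᴴ * A - 1 : Matrix n n ℂ) a b‖ ≤ coherence A := by
  rcases eq_or_ne a b with rfl | hab
  · simp [conjTranspose_mul_self_apply_self, hA, coherence_nonneg]
  · simpa [hab, hA] using norm_conjTranspose_mul_self_apply_le_coherence A hab

lemma norm_gram_mul_sub_gram_le {A : Matrix L n ℂ} (hA : ∀ j, colNorm A j = 1)
    (H : Matrix n p ℂ) (j k : p) :
    ‖((A * H)ᴴ * (A * H)) j k - (Hᴴ * H) j k‖ ≤
      coherence A * (l1 (fun i => H i j) * l1 (fun i => H i k)) := by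
  classical
  have hgram : (A * H)ᴴ * (A * H) - Hᴴ * H = Hᴴ * (Aᴴ * A - 1) * H := by
    simp only [conjTranspose_mul, Matrix.mul_sub, Matrix.sub_mul, Matrix.mul_one, Matrix.mul_assoc]
  rw [← Matrix.sub_apply, hgram]
  exact norm_conjTranspose_mul_mul_apply_le _ _ _
    (norm_conjTranspose_mul_self_sub_one_apply_le hA) j k

variable {s : ℕ} {A : Matrix L n ℂ} {H : Matrix n p ℂ}

lemma norm_gram_mul_sub_gram_le_of_sparse (hA : ∀ j, colNorm A j = 1)
    (hHs : ∀ j, sparse s fun i => H i j) (j k : p) :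
    ‖((A * H)ᴴ * (A * H)) j k - (Hᴴ * H) j k‖ ≤
      s * coherence A * (colNorm H j * colNorm H k) := by
  refine (norm_gram_mul_sub_gram_le hA H j k).trans ?_
  calc coherence A * (l1 (fun i => H i j) * l1 (fun i => H i k))
      ≤ coherence A * ((√s * colNorm H j) * (√s * colNorm H k)) := by
        refine mul_le_mul_of_nonneg_left ?_ (coherence_nonneg A)
        exact mul_le_mul (l1_le_sqrt_mul_of_sparse (hHs j)) (l1_le_sqrt_mul_of_sparse (hHs k))
          (l1_nonneg _) (mul_nonneg (Real.sqrt_nonneg _) (colNorm_nonneg H j))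
    _ = s * coherence A * (colNorm H j * colNorm H k) := by
        rw [mul_mul_mul_comm, Real.mul_self_sqrt (Nat.cast_nonneg s)]
        ring

lemma norm_gram_mul_apply_le_of_sparse [Fintype p] (hA : ∀ j, colNorm A j = 1)
    (hHs : ∀ j, sparse s fun i => H i j) {j k : p} (hjk : j ≠ k) :
    ‖((A * H)ᴴ * (A * H)) j k‖ ≤
      (coherence H + s * coherence A) * (colNorm H j * colNorm H k) :=
  calc ‖((A * H)ᴴ * (A * H)) j k‖
      ≤ ‖(Hᴴ * H) j k‖ + ‖((A * H)ᴴ * (A * H)) j k - (Hᴴ * H) j k‖ :=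
        norm_le_norm_add_norm_sub' _ _
    _ ≤ coherence H * (colNorm H j * colNorm H k) +
          s * coherence A * (colNorm H j * colNorm H k) :=
        add_le_add (norm_conjTranspose_mul_self_apply_le_coherence H hjk)
          (norm_gram_mul_sub_gram_le_of_sparse hA hHs j k)
    _ = (coherence H + s * coherence A) * (colNorm H j * colNorm H k) := by ring

lemma colNorm_mul_sq_ge_of_sparse (hA : ∀ j, colNorm A j = 1)
    (hHs : ∀ j, sparse s fun i => H i j) (j : p) :
    (1 - s * coherence A) * colNorm H j ^ 2 ≤ colNorm (A * H) j ^ 2 := by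
  have h := norm_gram_mul_sub_gram_le_of_sparse hA hHs j j
  rw [conjTranspose_mul_self_apply_self, conjTranspose_mul_self_apply_self, ← Complex.ofReal_sub,
    Complex.norm_real, Real.norm_eq_abs] at h
  linarith [(abs_le.1 h).1]

end Perturbation

theorem coherence_mul_le_of_sparse_cols_general {L N P : ℕ} (s : ℕ)
    (A : Matrix (Fin L) (Fin N) ℂ) (H : Matrix (Fin N) (Fin P) ℂ)
    (hA : ∀ j, colNorm A j = 1)
    (hHs : ∀ j, sparse s (fun i => H i j))
    (hsμ : (s : ℝ) * coherence A ≠ 1) :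
    coherence (A * H) ≤
      (coherence H + (s : ℝ) * coherence A) / |1 - (s : ℝ) * coherence A| := by
  have hμH := coherence_nonneg H
  have hμA := coherence_nonneg A
  rcases hsμ.lt_or_gt with hlt | hgt
  · rw [abs_of_pos (sub_pos.2 hlt)]
    exact coherence_le_div (colNorm H) (by positivity) (sub_pos.2 hlt)
      (fun j k hjk => norm_gram_mul_apply_le_of_sparse hA hHs hjk)
      (colNorm_mul_sq_ge_of_sparse hA hHs)
  · rw [abs_of_neg (sub_neg.2 hgt)]
    calc coherence (A * H) ≤ 1 := coherence_le_one _
      _ ≤ _ := by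
        rw [one_le_div (by linarith)]
        linarith

/-- Corollary 4.3: coherence of a matrix product with column-sparse right factor. -/
theorem coherence_mul_le_of_sparse_cols {L N P : ℕ} (s : ℕ)
    (A : Matrix (Fin L) (Fin N) ℂ) (H : Matrix (Fin N) (Fin P) ℂ)
    (hA : ∀ j, colNorm A j = 1)
    (hH : ∀ j, ∃ i, H i j ≠ 0)
    (hHs : ∀ j, sparse s (fun i => H i j))
    (hAH : ∀ j, ∃ i, (A * H) i j ≠ 0)
    (hsμ : (s : ℝ) * coherence A ≠ 1) :
    coherence (A * H) ≤
      (coherence H + (s : ℝ) * coherence A) / |1 - (s : ℝ) * coherence A| :=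
  coherence_mul_le_of_sparse_cols_general s A H hA hHs hsμ
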